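/- Conversely, if the multiplication (a # h)(b # g) = Σ a (h₍₁₎ · b) σ(h₍₂₎, g₍₁₎) # h₍₃₎ g₍₂₎ on B ⊗ H is associative with unit 1_B ⊗ 1_H, and σ : H ⊗ H → B is convolution-invertible with σ(1,h) = σ(h,1) = ε(h)1_B and 1 · b = b and h · 1_B = ε(h)1_B, then α is a weak action, σ satisfies the 2-cocycle condition, and B is a twisted H-module under α and σ. -/

import Mathlib

open TensorProduct LinearMap

noncomputable section

namespace CrossedGalois

/-- Convolution product of two linear maps from a coalgebra to an algebra. -/
def conv (k : Type) [Field k] {C B : Type} [AddCommGroup C] [Module k C] [Coalgebra k C]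
    [Ring B] [Algebra k B] (f g : C →ₗ[k] B) : C →ₗ[k] B :=
  (LinearMap.mul' k B) ∘ₗ (TensorProduct.map f g) ∘ₗ (Coalgebra.comul (R := k))

/-- The unit `η ∘ ε` for the convolution product. -/
def convOne (k : Type) [Field k] (C B : Type) [AddCommGroup C] [Module k C] [Coalgebra k C]
    [Ring B] [Algebra k B] : C →ₗ[k] B :=
  (Algebra.linearMap k B) ∘ₗ (Coalgebra.counit (R := k))

/-- Convolution invertibility. -/
def ConvInvertible (k : Type) [Field k] {C B : Type} [AddCommGroup C] [Module k C]
    [Coalgebra k C] [Ring B] [Algebra k B] (f : C →ₗ[k] B) : Prop :=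
  ∃ g : C →ₗ[k] B, conv k f g = convOne k C B ∧ conv k g f = convOne k C B

variable (k : Type) [Field k]

section CrossedProduct

variable (B H : Type) [Ring B] [Algebra k B] [Ring H] [Bialgebra k H]

/-- `h ↦ α (h ⊗ b)`. -/
def actOn (α : H ⊗[k] B →ₗ[k] B) (b : B) : H →ₗ[k] B :=
  α ∘ₗ ((TensorProduct.mk k H B).flip b)

/-- `α` is a weak action of the bialgebra `H` on the algebra `B` :
`h · (ab) = Σ (h₁ · a)(h₂ · b)` and `h · 1 = ε(h) 1`. -/
structure IsWeakAction (α : H ⊗[k] B →ₗ[k] B) : Prop where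
  smul_mul : ∀ (h : H) (a b : B),
    α (h ⊗ₜ (a * b)) =
      LinearMap.mul' k B ((TensorProduct.map α α)
        ((TensorProduct.tensorTensorTensorComm k H H B B)
          ((Coalgebra.comul (R := k) h) ⊗ₜ (a ⊗ₜ b))))
  smul_one : ∀ h : H, α (h ⊗ₜ (1 : B)) = (Coalgebra.counit (R := k) h) • (1 : B)

/-- The 2-cocycle condition
`Σ (h₁ · σ(g₁,l₁)) σ(h₂, g₂l₂) = Σ σ(h₁,g₁) σ(h₂g₂, l)`
together with the normalisation `σ(h,1) = σ(1,h) = ε(h)1`. -/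
structure IsCocycle (α : H ⊗[k] B →ₗ[k] B) (σ : H ⊗[k] H →ₗ[k] B) : Prop where
  cocycle :
    conv k (α ∘ₗ lTensor H σ) (σ ∘ₗ lTensor H (LinearMap.mul' k H)) =
    conv k (σ ∘ₗ lTensor H ((TensorProduct.rid k H).toLinearMap ∘ₗ
              lTensor H (Coalgebra.counit (R := k))))
           (σ ∘ₗ (rTensor H (LinearMap.mul' k H)) ∘ₗ
              (TensorProduct.assoc k H H H).symm.toLinearMap)
  norm_right : ∀ h : H, σ (h ⊗ₜ (1 : H)) = (Coalgebra.counit (R := k) h) • (1 : B)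
  norm_left : ∀ h : H, σ ((1 : H) ⊗ₜ h) = (Coalgebra.counit (R := k) h) • (1 : B)

/-- `B` is a twisted `H`-module:  `1 · b = b` and
`Σ (h₁ · (g₁ · b)) σ(h₂,g₂) = Σ σ(h₁,g₁) ((h₂g₂) · b)`. -/
structure IsTwistedModule (α : H ⊗[k] B →ₗ[k] B) (σ : H ⊗[k] H →ₗ[k] B) : Prop where
  one_smul : ∀ b : B, α ((1 : H) ⊗ₜ b) = b
  twisted : ∀ b : B,
    conv k (α ∘ₗ lTensor H (actOn k B H α b)) σ =
    conv k σ ((actOn k B H α b) ∘ₗ LinearMap.mul' k H)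

/-- The multiplication of the crossed product `B #_σ H`:
`(a # h)(b # g) = Σ a (h₁·b) σ(h₂,g₁) # h₃g₂`. -/
def cpMul (α : H ⊗[k] B →ₗ[k] B) (σ : H ⊗[k] H →ₗ[k] B) :
    (B ⊗[k] H) ⊗[k] (B ⊗[k] H) →ₗ[k] B ⊗[k] H :=
  (rTensor H (LinearMap.mul' k B)) ∘ₗ
  (TensorProduct.assoc k B B H).symm.toLinearMap ∘ₗ
  (lTensor B
    ((rTensor H (LinearMap.mul' k B)) ∘ₗ
     (TensorProduct.assoc k B B H).symm.toLinearMap ∘ₗ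
     (TensorProduct.map α (TensorProduct.map σ (LinearMap.mul' k H))) ∘ₗ
     (lTensor (H ⊗[k] B) (TensorProduct.tensorTensorTensorComm k H H H H).toLinearMap) ∘ₗ
     (TensorProduct.tensorTensorTensorComm k H (H ⊗[k] H) B (H ⊗[k] H)).toLinearMap ∘ₗ
     (TensorProduct.map ((lTensor H (Coalgebra.comul (R := k))) ∘ₗ (Coalgebra.comul (R := k)))
       (lTensor B (Coalgebra.comul (R := k)))))) ∘ₗ
  (TensorProduct.assoc k B H (B ⊗[k] H)).toLinearMap

/-- The unit `1 # 1` of the crossed product. -/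
def cpOne : B ⊗[k] H := (1 : B) ⊗ₜ (1 : H)

/-- The crossed product multiplication is associative with unit `1 ⊗ 1`. -/
def IsCpAlgebra (α : H ⊗[k] B →ₗ[k] B) (σ : H ⊗[k] H →ₗ[k] B) : Prop :=
  (∀ x y z : B ⊗[k] H,
      cpMul k B H α σ ((cpMul k B H α σ (x ⊗ₜ y)) ⊗ₜ z) =
      cpMul k B H α σ (x ⊗ₜ (cpMul k B H α σ (y ⊗ₜ z)))) ∧
  (∀ x : B ⊗[k] H, cpMul k B H α σ ((cpOne k B H) ⊗ₜ x) = x) ∧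
  (∀ x : B ⊗[k] H, cpMul k B H α σ (x ⊗ₜ (cpOne k B H)) = x)

/-- The right `H`-coaction `id_B ⊗ Δ` on `B ⊗ H`. -/
def cpCoact : B ⊗[k] H →ₗ[k] (B ⊗[k] H) ⊗[k] H :=
  (TensorProduct.assoc k B H H).symm.toLinearMap ∘ₗ lTensor B (Coalgebra.comul (R := k))

end CrossedProduct

section Galois

variable (H : Type) [Ring H] [Bialgebra k H]

/-- The submodule of `A ⊗ A` spanned by `xb ⊗ y - x ⊗ by` for `b` in a given subset `S`,
with respect to a given multiplication map `M`; its quotient is `A ⊗_B A`. -/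
def midRel {A : Type} [AddCommGroup A] [Module k A]
    (M : A ⊗[k] A →ₗ[k] A) (S : Set A) : Submodule k (A ⊗[k] A) :=
  Submodule.span k {z | ∃ x y b, b ∈ S ∧
    z = (M (x ⊗ₜ b)) ⊗ₜ y - x ⊗ₜ (M (b ⊗ₜ y))}

/-- The map `can' : A ⊗ A → A ⊗ H`, `x ⊗ y ↦ Σ x y₍₀₎ ⊗ y₍₁₎`. -/
def canMap {A : Type} [AddCommGroup A] [Module k A]
    (M : A ⊗[k] A →ₗ[k] A) (ρ : A →ₗ[k] A ⊗[k] H) : A ⊗[k] A →ₗ[k] A ⊗[k] H :=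
  (rTensor H M) ∘ₗ (TensorProduct.assoc k A A H).symm.toLinearMap ∘ₗ (lTensor A ρ)

/-- The extension is `H`-Galois: the canonical map descends to a bijection
`A ⊗_B A → A ⊗ H`. -/
def IsGalois {A : Type} [AddCommGroup A] [Module k A]
    (M : A ⊗[k] A →ₗ[k] A) (ρ : A →ₗ[k] A ⊗[k] H) (S : Set A) : Prop :=
  ∃ can : ((A ⊗[k] A) ⧸ midRel k M S) →ₗ[k] A ⊗[k] H,
    can ∘ₗ (midRel k M S).mkQ = canMap k H M ρ ∧ Function.Bijective can

/-- `A` is a right `H`-comodule algebra. -/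
structure IsComodAlg {A : Type} [Ring A] [Algebra k A]
    (ρ : A →ₗ[k] A ⊗[k] H) : Prop where
  coassoc : ∀ a : A, (rTensor H ρ) (ρ a) =
    (TensorProduct.assoc k A H H).symm ((lTensor A (Coalgebra.comul (R := k))) (ρ a))
  counit_id : ∀ a : A,
    (TensorProduct.rid k A) ((lTensor A (Coalgebra.counit (R := k))) (ρ a)) = a
  mul : ∀ a b : A, ρ (a * b) = ρ a * ρ b
  one : ρ 1 = 1

end Galois

end CrossedGalois

namespace CrossedGalois

/-!
Each identity is associativity of `#` on a triple built from `a # 1` and `1 # h`, seen through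
`id ⊗ ε : B ⊗ H → B`. The normalisations give `(1 # h)(b # 1) = Σ h₁·b # h₂` and
`(1 # h)(1 # g) = Σ σ(h₁, g₁) # h₂g₂`, while `(id ⊗ ε)((a # h)(b # g)) = Σ a (h₁·b) σ(h₂, g)`.
So `((1 # h)(a # 1))(b # 1) = (1 # h)(ab # 1)` is the weak action identity,
`((1 # h)(1 # g))(1 # l) = (1 # h)((1 # g)(1 # l))` the cocycle identity and
`((1 # h)(1 # g))(b # 1) = (1 # h)((1 # g)(b # 1))` the twisted module identity.
-/

open Coalgebra

lemma tensorTensorTensorComm_tmul_map {k M N P Q P' Q' : Type*} [CommSemiring k]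
    [AddCommMonoid M] [Module k M] [AddCommMonoid N] [Module k N] [AddCommMonoid P] [Module k P]
    [AddCommMonoid Q] [Module k Q] [AddCommMonoid P'] [Module k P'] [AddCommMonoid Q']
    [Module k Q'] (f : P →ₗ[k] P') (g : Q →ₗ[k] Q') (x : M ⊗[k] N) (w : P ⊗[k] Q) :
    tensorTensorTensorComm k M N P' Q' (x ⊗ₜ map f g w) =
      map (lTensor M f) (lTensor N g) (tensorTensorTensorComm k M N P Q (x ⊗ₜ w)) := by
  have key := LinearMap.congr_fun
    (tensorTensorTensorComm_comp_map (f := LinearMap.id) (g := LinearMap.id) (h := f) (j := g))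
    (x ⊗ₜ w)
  simp only [LinearMap.comp_apply, map_tmul, map_id, LinearMap.id_apply] at key
  exact key

section Counit

variable {R : Type*} [CommSemiring R] {M N C D : Type*}
  [AddCommMonoid M] [Module R M] [AddCommMonoid N] [Module R N]
  [AddCommMonoid C] [Module R C] [Coalgebra R C] [AddCommMonoid D] [Module R D] [Coalgebra R D]

variable (R M C) in
def idCounit : M ⊗[R] C →ₗ[R] M :=
  (TensorProduct.rid R M).toLinearMap ∘ₗ lTensor M (counit (R := R))

def counitId (R C M : Type*) [CommSemiring R] [AddCommMonoid C] [Module R C] [Coalgebra R C]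
    [AddCommMonoid M] [Module R M] : C ⊗[R] M →ₗ[R] M :=
  (TensorProduct.lid R M).toLinearMap ∘ₗ rTensor M (counit (R := R))

@[simp]
lemma idCounit_tmul (m : M) (c : C) : idCounit R M C (m ⊗ₜ c) = counit (R := R) c • m := by
  simp [idCounit]

@[simp]
lemma counitId_tmul (c : C) (m : M) : counitId R C M (c ⊗ₜ m) = counit (R := R) c • m := by
  simp [counitId]

@[simp]
lemma idCounit_comul (c : C) : idCounit R C C (comul c) = c := by
  simp [idCounit]

@[simp]
lemma counitId_comul (c : C) : counitId R C C (comul c) = c := by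
  simp [counitId]

lemma idCounit_comp_map (f : M →ₗ[R] N) (g : C →ₗ[R] D) (hg : counit ∘ₗ g = counit) :
    idCounit R N D ∘ₗ map f g = f ∘ₗ idCounit R M C := by
  ext m c
  simp [← LinearMap.comp_apply (counit (R := R)) g, hg]

lemma counitId_comp_lTensor (f : M →ₗ[R] N) :
    counitId R C N ∘ₗ lTensor C f = f ∘ₗ counitId R C M := by
  ext c m
  simp

lemma lTensor_idCounit_lTensor_comul (x : M ⊗[R] C) :
    lTensor M (idCounit R C C) (lTensor M comul x) = x := by
  rw [← LinearMap.comp_apply, ← lTensor_comp,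
    show idCounit R C C ∘ₗ comul = LinearMap.id from LinearMap.ext idCounit_comul, lTensor_id,
    LinearMap.id_apply]

lemma lTensor_counitId_lTensor_comul (x : M ⊗[R] C) :
    lTensor M (counitId R C C) (lTensor M comul x) = x := by
  rw [← LinearMap.comp_apply, ← lTensor_comp,
    show counitId R C C ∘ₗ comul = LinearMap.id from LinearMap.ext counitId_comul, lTensor_id,
    LinearMap.id_apply]

lemma counit_comp_mul' {A : Type*} [Semiring A] [Bialgebra R A] :
    counit ∘ₗ mul' R A = counit (R := R) (A := A ⊗[R] A) := by
  ext a b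
  simp [Bialgebra.counit_mul, mul_comm]

end Counit

section Convolution

variable {k : Type} [Field k] {A C D E : Type} [Ring A] [Algebra k A]
  [AddCommGroup C] [Module k C] [Coalgebra k C] [AddCommGroup D] [Module k D] [Coalgebra k D]
  [AddCommGroup E] [Module k E] [Coalgebra k E]

lemma conv_tmul (f g : C ⊗[k] D →ₗ[k] A) (c : C) (d : D) :
    conv k f g (c ⊗ₜ d) =
      mul' k A (map f g (tensorTensorTensorComm k C C D D (comul c ⊗ₜ comul d))) :=
  rfl

lemma conv_lTensor_idCounit_tmul (f : C ⊗[k] D →ₗ[k] A) (g : (C ⊗[k] D) ⊗[k] E →ₗ[k] A)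
    (c : C) (d : D) (e : E) :
    conv k (f ∘ₗ lTensor C (idCounit k D E)) (g ∘ₗ (TensorProduct.assoc k C D E).symm.toLinearMap)
        (c ⊗ₜ (d ⊗ₜ e)) =
      conv k f (g ∘ₗ (TensorProduct.mk k (C ⊗[k] D) E).flip e) (c ⊗ₜ d) := by
  have key : mul' k A ∘ₗ
        map (f ∘ₗ lTensor C (idCounit k D E))
          (g ∘ₗ (TensorProduct.assoc k C D E).symm.toLinearMap) ∘ₗ
        (tensorTensorTensorComm k C C (D ⊗[k] E) (D ⊗[k] E)).toLinearMap ∘ₗ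
        lTensor (C ⊗[k] C) (tensorTensorTensorComm k D D E E).toLinearMap =
      mul' k A ∘ₗ map f g ∘ₗ (TensorProduct.assoc k (C ⊗[k] D) (C ⊗[k] D) E).toLinearMap ∘ₗ
        rTensor E (tensorTensorTensorComm k C C D D).toLinearMap ∘ₗ
        (TensorProduct.assoc k (C ⊗[k] C) (D ⊗[k] D) E).symm.toLinearMap ∘ₗ
        lTensor (C ⊗[k] C) (lTensor (D ⊗[k] D) (counitId k E E)) := by
    -- on pure tensors both sides are `ε(e₁) f(c₁ ⊗ d₁) g((c₂ ⊗ d₂) ⊗ e₂)`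
    ext c₁ c₂ d₁ d₂ e₁ e₂
    simp
  have hflip : map f (g ∘ₗ (TensorProduct.mk k (C ⊗[k] D) E).flip e) =
      map f g ∘ₗ (TensorProduct.assoc k (C ⊗[k] D) (C ⊗[k] D) E).toLinearMap ∘ₗ
        (TensorProduct.mk k _ E).flip e := by
    ext
    simp
  simpa [conv_tmul, hflip, AlgebraTensorModule.tensorTensorTensorComm_eq] using
    LinearMap.congr_fun key (comul c ⊗ₜ (comul d ⊗ₜ comul e))

end Convolution

section CrossedProduct

variable {k B H : Type} [Field k] [Ring B] [Algebra k B] [Ring H] [Bialgebra k H]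
  (α : H ⊗[k] B →ₗ[k] B) (σ : H ⊗[k] H →ₗ[k] B)

/-- `(h₁ ⊗ h₂ ⊗ h₃) ⊗ (b ⊗ g₁ ⊗ g₂) ↦ (h₁ · b) σ(h₂, g₁) ⊗ h₃ g₂`, the crossed product
multiplication before the coproducts are inserted. -/
def cpMulCore : (H ⊗[k] (H ⊗[k] H)) ⊗[k] (B ⊗[k] (H ⊗[k] H)) →ₗ[k] B ⊗[k] H :=
  rTensor H (mul' k B) ∘ₗ (TensorProduct.assoc k B B H).symm.toLinearMap ∘ₗ
    map α (map σ (mul' k H)) ∘ₗ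
    lTensor (H ⊗[k] B) (tensorTensorTensorComm k H H H H).toLinearMap ∘ₗ
    (tensorTensorTensorComm k H (H ⊗[k] H) B (H ⊗[k] H)).toLinearMap

def cpLeftMul : H ⊗[k] (B ⊗[k] H) →ₗ[k] B ⊗[k] H :=
  cpMulCore α σ ∘ₗ map (lTensor H comul ∘ₗ comul) (lTensor B comul)

def CpMulAssoc : Prop :=
  ∀ x y z : B ⊗[k] H, cpMul k B H α σ (cpMul k B H α σ (x ⊗ₜ y) ⊗ₜ z) =
    cpMul k B H α σ (x ⊗ₜ cpMul k B H α σ (y ⊗ₜ z))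

variable {α σ}

lemma cpMul_tmul (a : B) (h : H) (y : B ⊗[k] H) :
    cpMul k B H α σ ((a ⊗ₜ h) ⊗ₜ y) = rTensor H (mulLeft k a) (cpLeftMul α σ (h ⊗ₜ y)) := by
  have hmul : rTensor H (mul' k B) ∘ₗ (TensorProduct.assoc k B B H).symm.toLinearMap ∘ₗ
      TensorProduct.mk k B (B ⊗[k] H) a = rTensor H (mulLeft k a) := by
    ext b g
    simp
  exact LinearMap.congr_fun hmul _

lemma cpMul_one_tmul (h : H) (y : B ⊗[k] H) :
    cpMul k B H α σ (((1 : B) ⊗ₜ h) ⊗ₜ y) = cpLeftMul α σ (h ⊗ₜ y) := by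
  simp [cpMul_tmul]

lemma idCounit_comp_cpMulCore :
    idCounit k B H ∘ₗ cpMulCore α σ =
      mul' k B ∘ₗ map α σ ∘ₗ (tensorTensorTensorComm k H H B H).toLinearMap ∘ₗ
        map (lTensor H (idCounit k H H)) (lTensor B (idCounit k H H)) := by
  ext h₁ h₂ h₃ b g₁ g₂
  simp [cpMulCore, Bialgebra.counit_mul, ← smul_tmul', smul_smul, mul_comm]

lemma idCounit_cpLeftMul (h : H) (y : B ⊗[k] H) :
    idCounit k B H (cpLeftMul α σ (h ⊗ₜ y)) =
      mul' k B (map α σ (tensorTensorTensorComm k H H B H (comul h ⊗ₜ y))) := by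
  simpa [cpLeftMul, lTensor_idCounit_lTensor_comul] using
    LinearMap.congr_fun (idCounit_comp_cpMulCore (α := α) (σ := σ))
      (lTensor H comul (comul h) ⊗ₜ lTensor B comul y)

lemma cpMulCore_comp_tmul_one_one (hσ1r : ∀ h : H, σ (h ⊗ₜ (1 : H)) = counit (R := k) h • (1 : B))
    (b : B) :
    cpMulCore α σ ∘ₗ (TensorProduct.mk k _ _).flip (b ⊗ₜ ((1 : H) ⊗ₜ (1 : H))) =
      rTensor H (actOn k B H α b) ∘ₗ lTensor H (counitId k H H) := by
  ext h₁ h₂ h₃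
  simp [cpMulCore, actOn, hσ1r, smul_tmul, tmul_smul]

lemma cpLeftMul_tmul_one (hσ1r : ∀ h : H, σ (h ⊗ₜ (1 : H)) = counit (R := k) h • (1 : B))
    (h : H) (b : B) :
    cpLeftMul α σ (h ⊗ₜ (b ⊗ₜ (1 : H))) = rTensor H (actOn k B H α b) (comul h) := by
  have key := LinearMap.congr_fun (cpMulCore_comp_tmul_one_one (α := α) hσ1r b)
    (lTensor H comul (comul h))
  simp only [LinearMap.comp_apply, flip_apply, TensorProduct.mk_apply,
    lTensor_counitId_lTensor_comul] at key
  simpa [cpLeftMul, Algebra.TensorProduct.one_def] using key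

lemma cpMulCore_comp_one_tmul (hα1' : ∀ h : H, α (h ⊗ₜ (1 : B)) = counit (R := k) h • (1 : B)) :
    cpMulCore α σ ∘ₗ lTensor _ (TensorProduct.mk k B (H ⊗[k] H) 1) =
      map σ (mul' k H) ∘ₗ (tensorTensorTensorComm k H H H H).toLinearMap ∘ₗ
        rTensor (H ⊗[k] H) (counitId k H (H ⊗[k] H)) := by
  ext h₁ h₂ h₃ g₁ g₂
  simp [cpMulCore, hα1', ← smul_tmul']

lemma cpLeftMul_one_tmul (hα1' : ∀ h : H, α (h ⊗ₜ (1 : B)) = counit (R := k) h • (1 : B))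
    (h g : H) :
    cpLeftMul α σ (h ⊗ₜ ((1 : B) ⊗ₜ g)) = map σ (mul' k H) (comul (h ⊗ₜ g)) := by
  have hcomul : counitId k H (H ⊗[k] H) (lTensor H comul (comul h)) = comul h := by
    rw [← LinearMap.comp_apply, counitId_comp_lTensor, LinearMap.comp_apply, counitId_comul]
  simpa [cpLeftMul, hcomul, AlgebraTensorModule.tensorTensorTensorComm_eq] using
    LinearMap.congr_fun (cpMulCore_comp_one_tmul hα1') (lTensor H comul (comul h) ⊗ₜ comul g)

lemma idCounit_cpMul_tmul (a : B) (h : H) (y : B ⊗[k] H) :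
    idCounit k B H (cpMul k B H α σ ((a ⊗ₜ h) ⊗ₜ y)) =
      a * idCounit k B H (cpLeftMul α σ (h ⊗ₜ y)) := by
  rw [cpMul_tmul, rTensor, ← LinearMap.comp_apply,
    idCounit_comp_map (mulLeft k a) LinearMap.id (comp_id _)]
  rfl

lemma idCounit_cpMul_tmul_one (hσ1r : ∀ h : H, σ (h ⊗ₜ (1 : H)) = counit (R := k) h • (1 : B))
    (x : B ⊗[k] H) (b : B) :
    idCounit k B H (cpMul k B H α σ (x ⊗ₜ (b ⊗ₜ (1 : H)))) =
      mul' k B (lTensor B (actOn k B H α b) x) := by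
  induction x using TensorProduct.induction_on with
  | zero => simp
  | tmul a h =>
    rw [idCounit_cpMul_tmul, cpLeftMul_tmul_one hσ1r, rTensor, ← LinearMap.comp_apply,
      idCounit_comp_map _ LinearMap.id (comp_id _)]
    simp
  | add x y hx hy => simp [add_tmul, hx, hy]

lemma idCounit_cpMul_tmul_one_tmul
    (hα1' : ∀ h : H, α (h ⊗ₜ (1 : B)) = counit (R := k) h • (1 : B)) (x : B ⊗[k] H) (l : H) :
    idCounit k B H (cpMul k B H α σ (x ⊗ₜ ((1 : B) ⊗ₜ l))) =
      mul' k B (lTensor B (σ ∘ₗ (TensorProduct.mk k H H).flip l) x) := by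
  induction x using TensorProduct.induction_on with
  | zero => simp
  | tmul a h =>
    rw [idCounit_cpMul_tmul, cpLeftMul_one_tmul hα1', ← LinearMap.comp_apply,
      idCounit_comp_map σ (mul' k H) counit_comp_mul', LinearMap.comp_apply, idCounit_comul]
    simp
  | add x y hx hy => simp [add_tmul, hx, hy]

lemma cpMul_tmul_one_tmul_one
    (hσ1r : ∀ h : H, σ (h ⊗ₜ (1 : H)) = counit (R := k) h • (1 : B))
    (hα1 : ∀ b : B, α ((1 : H) ⊗ₜ b) = b) (a b : B) :
    cpMul k B H α σ ((a ⊗ₜ (1 : H)) ⊗ₜ (b ⊗ₜ (1 : H))) = (a * b) ⊗ₜ (1 : H) := by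
  simp [cpMul_tmul, cpLeftMul_tmul_one hσ1r, Algebra.TensorProduct.one_def, actOn, hα1]

lemma smul_mul_of_cpMul_assoc
    (hσ1r : ∀ h : H, σ (h ⊗ₜ (1 : H)) = counit (R := k) h • (1 : B))
    (hα1 : ∀ b : B, α ((1 : H) ⊗ₜ b) = b)
    (hassoc : CpMulAssoc α σ)
    (h : H) (a b : B) :
    α (h ⊗ₜ (a * b)) =
      mul' k B (map α α (tensorTensorTensorComm k H H B B (comul h ⊗ₜ (a ⊗ₜ b)))) := by
  have hsplit : map α α ∘ₗ (tensorTensorTensorComm k H H B B).toLinearMap ∘ₗ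
      (TensorProduct.mk k (H ⊗[k] H) (B ⊗[k] B)).flip (a ⊗ₜ b) =
      map (actOn k B H α a) (actOn k B H α b) := by
    ext
    simp [actOn]
  calc α (h ⊗ₜ (a * b))
      = idCounit k B H (cpMul k B H α σ
          (((1 : B) ⊗ₜ h) ⊗ₜ cpMul k B H α σ ((a ⊗ₜ (1 : H)) ⊗ₜ (b ⊗ₜ (1 : H))))) := by
        rw [cpMul_tmul_one_tmul_one hσ1r hα1, idCounit_cpMul_tmul_one hσ1r]
        simp [actOn]
    _ = idCounit k B H (cpMul k B H α σ
          (cpMul k B H α σ (((1 : B) ⊗ₜ h) ⊗ₜ (a ⊗ₜ (1 : H))) ⊗ₜ (b ⊗ₜ (1 : H)))) := by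
        rw [hassoc _ _ _]
    _ = mul' k B (map (actOn k B H α a) (actOn k B H α b) (comul h)) := by
        rw [idCounit_cpMul_tmul_one hσ1r, cpMul_one_tmul, cpLeftMul_tmul_one hσ1r,
          ← LinearMap.comp_apply (lTensor B _), lTensor_comp_rTensor]
    _ = _ := by
        rw [← hsplit]
        rfl

lemma twisted_of_cpMul_assoc
    (hσ1r : ∀ h : H, σ (h ⊗ₜ (1 : H)) = counit (R := k) h • (1 : B))
    (hα1' : ∀ h : H, α (h ⊗ₜ (1 : B)) = counit (R := k) h • (1 : B))
    (hassoc : CpMulAssoc α σ)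
    (b : B) :
    conv k (α ∘ₗ lTensor H (actOn k B H α b)) σ = conv k σ (actOn k B H α b ∘ₗ mul' k H) := by
  ext h g
  calc conv k (α ∘ₗ lTensor H (actOn k B H α b)) σ (h ⊗ₜ g)
      = idCounit k B H (cpMul k B H α σ
          (((1 : B) ⊗ₜ h) ⊗ₜ cpMul k B H α σ (((1 : B) ⊗ₜ g) ⊗ₜ (b ⊗ₜ (1 : H))))) := by
        rw [cpMul_one_tmul (h := g), cpLeftMul_tmul_one hσ1r, cpMul_one_tmul, idCounit_cpLeftMul,
          rTensor, tensorTensorTensorComm_tmul_map, ← LinearMap.comp_apply (map α σ), ← map_comp,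
          lTensor_id, comp_id]
        rfl
    _ = idCounit k B H (cpMul k B H α σ
          (cpMul k B H α σ (((1 : B) ⊗ₜ h) ⊗ₜ ((1 : B) ⊗ₜ g)) ⊗ₜ (b ⊗ₜ (1 : H)))) := by
        rw [hassoc _ _ _]
    _ = conv k σ (actOn k B H α b ∘ₗ mul' k H) (h ⊗ₜ g) := by
        rw [idCounit_cpMul_tmul_one hσ1r, cpMul_one_tmul, cpLeftMul_one_tmul hα1',
          ← LinearMap.comp_apply (lTensor B _), lTensor_comp_map]
        rfl

lemma cocycle_of_cpMul_assoc
    (hα1' : ∀ h : H, α (h ⊗ₜ (1 : B)) = counit (R := k) h • (1 : B))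
    (hassoc : CpMulAssoc α σ) :
    conv k (α ∘ₗ lTensor H σ) (σ ∘ₗ lTensor H (mul' k H)) =
      conv k (σ ∘ₗ lTensor H ((TensorProduct.rid k H).toLinearMap ∘ₗ lTensor H counit))
        (σ ∘ₗ rTensor H (mul' k H) ∘ₗ (TensorProduct.assoc k H H H).symm.toLinearMap) := by
  ext h g l
  calc conv k (α ∘ₗ lTensor H σ) (σ ∘ₗ lTensor H (mul' k H)) (h ⊗ₜ (g ⊗ₜ l))
      = idCounit k B H (cpMul k B H α σ
          (((1 : B) ⊗ₜ h) ⊗ₜ cpMul k B H α σ (((1 : B) ⊗ₜ g) ⊗ₜ ((1 : B) ⊗ₜ l)))) := by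
        rw [cpMul_one_tmul (h := g), cpLeftMul_one_tmul hα1', cpMul_one_tmul, idCounit_cpLeftMul,
          tensorTensorTensorComm_tmul_map, ← LinearMap.comp_apply (map α σ), ← map_comp]
        rfl
    _ = idCounit k B H (cpMul k B H α σ
          (cpMul k B H α σ (((1 : B) ⊗ₜ h) ⊗ₜ ((1 : B) ⊗ₜ g)) ⊗ₜ ((1 : B) ⊗ₜ l))) := by
        rw [hassoc _ _ _]
    _ = conv k σ ((σ ∘ₗ rTensor H (mul' k H)) ∘ₗ (TensorProduct.mk k (H ⊗[k] H) H).flip l)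
          (h ⊗ₜ g) := by
        rw [idCounit_cpMul_tmul_one_tmul hα1', cpMul_one_tmul, cpLeftMul_one_tmul hα1',
          ← LinearMap.comp_apply (lTensor B _), lTensor_comp_map]
        rfl
    _ = _ := (conv_lTensor_idCounit_tmul σ (σ ∘ₗ rTensor H (mul' k H)) h g l).symm

end CrossedProduct

theorem crossed_product_isAlgebra_converse (k B H : Type) [Field k] [Ring B] [Algebra k B] [Ring H] [HopfAlgebra k H]
    (α : H ⊗[k] B →ₗ[k] B) (σ : H ⊗[k] H →ₗ[k] B)
    (hσ1l : ∀ h : H, σ ((1 : H) ⊗ₜ h) = (Coalgebra.counit (R := k) h) • (1 : B))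
    (hσ1r : ∀ h : H, σ (h ⊗ₜ (1 : H)) = (Coalgebra.counit (R := k) h) • (1 : B))
    (hα1 : ∀ b : B, α ((1 : H) ⊗ₜ b) = b)
    (hα1' : ∀ h : H, α (h ⊗ₜ (1 : B)) = (Coalgebra.counit (R := k) h) • (1 : B))
    (halg : IsCpAlgebra k B H α σ) :
    IsWeakAction k B H α ∧ IsCocycle k B H α σ ∧ IsTwistedModule k B H α σ :=
  ⟨⟨smul_mul_of_cpMul_assoc hσ1r hα1 halg.1, hα1'⟩,
    ⟨cocycle_of_cpMul_assoc hα1' halg.1, hσ1r, hσ1l⟩,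
    ⟨hα1, twisted_of_cpMul_assoc hσ1r hα1' halg.1⟩⟩

end CrossedGalois
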